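/- Correctness of the Brouwer-to-Sperner reduction on solutions: let c be a 2D discrete Brouwer coloring on the N × N grid, and let c' be the derived Sperner coloring on the 4N grid defined by the doubling construction (c'(2x,2y) = c'(2x+1,2y) = c'(2x,2y+1) = c(x,y), c'(2x−1,2y−1) = c(x,y) for x,y > 0, with appropriate boundary values and remaining points colored 0). Then for any trichromatic triangle t of c', the unit square of c containing the image of t under halving coordinates (rounding down) is trichromatic. -/
import Mathlib

/-- The derived Sperner coloring of a 2D discrete Brouwer coloring `c` on the
`N × N` grid: points with a zero coordinate obey the explicit boundary rule,
and interior points `(u,v)` take the color of the corresponding grid point of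
`c` (`(2x,2y)`, `(2x+1,2y)`, `(2x,2y+1)` and `(2x-1,2y-1)` all get `c (x,y)`),
all remaining points being colored `0`. -/
def derivedSperner (N : ℕ) (c : ℕ × ℕ → Fin 3) : ℕ × ℕ → Fin 3 := fun p =>
  let u := p.1
  let v := p.2
  if u = 0 then (if v = 0 then 2 else 1)
  else if v = 0 then (if u < 2 * N then 2 else 0)
  else
    let x := if u % 2 = 1 ∧ v % 2 = 1 then (u + 1) / 2 else u / 2
    let y := if u % 2 = 1 ∧ v % 2 = 1 then (v + 1) / 2 else v / 2
    if x < N ∧ y < N then c (x, y) else 0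

private lemma fin3_two : ∀ p q a b c : Fin 3,
    (a = p ∨ a = q) → (b = p ∨ b = q) → (c = p ∨ c = q) →
    a ≠ b → a ≠ c → b ≠ c → False := by decide

private lemma fin3_cover : ∀ a b c k : Fin 3,
    a ≠ b → a ≠ c → b ≠ c → k = a ∨ k = b ∨ k = c := by decide

private lemma dsB (N : ℕ) (hN : 2 ≤ N) (c : ℕ × ℕ → Fin 3)
    (hbottom : ∀ x, 0 < x → x < N → c (x, 0) = 2)
    (htop : ∀ x, 0 < x → x < N → c (x, N - 1) = 0)
    (hright : ∀ y, 0 < y → y < N - 1 → c (N - 1, y) = 0)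
    (a b : ℕ) (hab : 2 * N - 2 ≤ a) :
    derivedSperner N c (a, b) = 0 ∨ derivedSperner N c (a, b) = 2 := by
  simp only [derivedSperner]
  have ha0 : ¬ a = 0 := by omega
  rw [if_neg ha0]
  by_cases hb0 : b = 0
  · rw [if_pos hb0]; split_ifs <;> simp
  · rw [if_neg hb0]
    by_cases hpar : a % 2 = 1 ∧ b % 2 = 1
    · simp only [if_pos hpar]
      by_cases hxy : (a + 1) / 2 < N ∧ (b + 1) / 2 < N
      · rw [if_pos hxy]
        have hx : (a + 1) / 2 = N - 1 := by omega
        rw [hx]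
        have hy : (b + 1) / 2 = 0 ∨ (b + 1) / 2 = N - 1 ∨
            (0 < (b + 1) / 2 ∧ (b + 1) / 2 < N - 1) := by omega
        rcases hy with hy | hy | hy
        · rw [hy]; exact Or.inr (hbottom (N - 1) (by omega) (by omega))
        · rw [hy]; exact Or.inl (htop (N - 1) (by omega) (by omega))
        · exact Or.inl (hright _ hy.1 hy.2)
      · rw [if_neg hxy]; exact Or.inl rfl
    · simp only [if_neg hpar]
      by_cases hxy : a / 2 < N ∧ b / 2 < N
      · rw [if_pos hxy]
        have hx : a / 2 = N - 1 := by omega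
        rw [hx]
        have hy : b / 2 = 0 ∨ b / 2 = N - 1 ∨
            (0 < b / 2 ∧ b / 2 < N - 1) := by omega
        rcases hy with hy | hy | hy
        · rw [hy]; exact Or.inr (hbottom (N - 1) (by omega) (by omega))
        · rw [hy]; exact Or.inl (htop (N - 1) (by omega) (by omega))
        · exact Or.inl (hright _ hy.1 hy.2)
      · rw [if_neg hxy]; exact Or.inl rfl

private lemma dsD (N : ℕ) (hN : 2 ≤ N) (c : ℕ × ℕ → Fin 3)
    (hleft : ∀ y, y < N → c (0, y) = 1)
    (htop : ∀ x, 0 < x → x < N → c (x, N - 1) = 0)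
    (a b : ℕ) (hab : 2 * N - 2 ≤ b) :
    derivedSperner N c (a, b) = 0 ∨ derivedSperner N c (a, b) = 1 := by
  simp only [derivedSperner]
  have hb0 : ¬ b = 0 := by omega
  by_cases ha0 : a = 0
  · rw [if_pos ha0, if_neg hb0]; exact Or.inr rfl
  · rw [if_neg ha0, if_neg hb0]
    by_cases hpar : a % 2 = 1 ∧ b % 2 = 1
    · simp only [if_pos hpar]
      by_cases hxy : (a + 1) / 2 < N ∧ (b + 1) / 2 < N
      · rw [if_pos hxy]
        have hy : (b + 1) / 2 = N - 1 := by omega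
        rw [hy]
        have hx : (a + 1) / 2 = 0 ∨ 0 < (a + 1) / 2 := by omega
        rcases hx with hx | hx
        · rw [hx]; exact Or.inr (hleft (N - 1) (by omega))
        · exact Or.inl (htop _ hx (by omega))
      · rw [if_neg hxy]; exact Or.inl rfl
    · simp only [if_neg hpar]
      by_cases hxy : a / 2 < N ∧ b / 2 < N
      · rw [if_pos hxy]
        have hy : b / 2 = N - 1 := by omega
        rw [hy]
        have hx : a / 2 = 0 ∨ 0 < a / 2 := by omega
        rcases hx with hx | hx
        · rw [hx]; exact Or.inr (hleft (N - 1) (by omega))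
        · exact Or.inl (htop _ hx (by omega))
      · rw [if_neg hxy]; exact Or.inl rfl

private lemma ds_in (N : ℕ) (hN : 2 ≤ N) (c : ℕ × ℕ → Fin 3)
    (hleft : ∀ y, y < N → c (0, y) = 1)
    (hbottom : ∀ x, 0 < x → x < N → c (x, 0) = 2)
    (u v a b : ℕ) (hX : u / 2 + 1 < N) (hY : v / 2 + 1 < N)
    (ha : a = u ∨ a = u + 1) (hb : b = v ∨ b = v + 1) :
    derivedSperner N c (a, b) = c (u / 2, v / 2) ∨
    derivedSperner N c (a, b) = c (u / 2 + 1, v / 2) ∨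
    derivedSperner N c (a, b) = c (u / 2, v / 2 + 1) ∨
    derivedSperner N c (a, b) = c (u / 2 + 1, v / 2 + 1) := by
  simp only [derivedSperner]
  by_cases ha0 : a = 0
  · have hu0 : u = 0 := by omega
    rw [if_pos ha0]
    by_cases hb0 : b = 0
    · have hv0 : v = 0 := by omega
      rw [if_pos hb0]
      right; left
      rw [hu0, hv0]
      exact (hbottom 1 (by omega) (by omega)).symm
    · rw [if_neg hb0]
      left
      rw [hu0]
      exact (hleft (v / 2) (by omega)).symm
  · rw [if_neg ha0]
    by_cases hb0 : b = 0
    · have hv0 : v = 0 := by omega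
      rw [if_pos hb0, if_pos (show a < 2 * N by omega)]
      right; left
      rw [hv0]
      exact (hbottom (u / 2 + 1) (by omega) (by omega)).symm
    · rw [if_neg hb0]
      by_cases hpar : a % 2 = 1 ∧ b % 2 = 1
      · simp only [if_pos hpar]
        rw [if_pos (show (a + 1) / 2 < N ∧ (b + 1) / 2 < N by omega)]
        have hx : (a + 1) / 2 = u / 2 ∨ (a + 1) / 2 = u / 2 + 1 := by omega
        have hy : (b + 1) / 2 = v / 2 ∨ (b + 1) / 2 = v / 2 + 1 := by omega
        rcases hx with hx | hx <;> rcases hy with hy | hy <;> rw [hx, hy] <;> tauto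
      · simp only [if_neg hpar]
        rw [if_pos (show a / 2 < N ∧ b / 2 < N by omega)]
        have hx : a / 2 = u / 2 ∨ a / 2 = u / 2 + 1 := by omega
        have hy : b / 2 = v / 2 ∨ b / 2 = v / 2 + 1 := by omega
        rcases hx with hx | hx <;> rcases hy with hy | hy <;> rw [hx, hy] <;> tauto

/-- Correctness of the Brouwer-to-Sperner reduction on solutions: any
trichromatic elementary triangle of the derived Sperner coloring, based at grid
point `(u,v)` (in either orientation), yields a trichromatic unit square of the
original Brouwer coloring with bottom-left corner `(u / 2, v / 2)`. -/
theorem brouwer_to_sperner_solution_correct (N : ℕ) (hN : 2 ≤ N)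
    (c : ℕ × ℕ → Fin 3)
    (hleft : ∀ y, y < N → c (0, y) = 1)
    (hbottom : ∀ x, 0 < x → x < N → c (x, 0) = 2)
    (htop : ∀ x, 0 < x → x < N → c (x, N - 1) = 0)
    (hright : ∀ y, 0 < y → y < N - 1 → c (N - 1, y) = 0)
    (u v : ℕ)
    (htri :
      (u + v + 1 < 4 * N ∧
        derivedSperner N c (u, v) ≠ derivedSperner N c (u + 1, v) ∧
        derivedSperner N c (u, v) ≠ derivedSperner N c (u, v + 1) ∧
        derivedSperner N c (u + 1, v) ≠ derivedSperner N c (u, v + 1)) ∨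
      (u + v + 2 < 4 * N ∧
        derivedSperner N c (u + 1, v) ≠ derivedSperner N c (u, v + 1) ∧
        derivedSperner N c (u + 1, v) ≠ derivedSperner N c (u + 1, v + 1) ∧
        derivedSperner N c (u, v + 1) ≠ derivedSperner N c (u + 1, v + 1))) :
    u / 2 + 1 < N ∧ v / 2 + 1 < N ∧
      ∀ k : Fin 3,
        c (u / 2, v / 2) = k ∨ c (u / 2 + 1, v / 2) = k ∨
        c (u / 2, v / 2 + 1) = k ∨ c (u / 2 + 1, v / 2 + 1) = k := by
  have hX : u / 2 + 1 < N := by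
    by_contra h
    rcases htri with ⟨-, h1, h2, h3⟩ | ⟨-, h1, h2, h3⟩
    · exact fin3_two 0 2 _ _ _
        (dsB N hN c hbottom htop hright u v (by omega))
        (dsB N hN c hbottom htop hright (u + 1) v (by omega))
        (dsB N hN c hbottom htop hright u (v + 1) (by omega)) h1 h2 h3
    · exact fin3_two 0 2 _ _ _
        (dsB N hN c hbottom htop hright (u + 1) v (by omega))
        (dsB N hN c hbottom htop hright u (v + 1) (by omega))
        (dsB N hN c hbottom htop hright (u + 1) (v + 1) (by omega)) h1 h2 h3
  have hY : v / 2 + 1 < N := by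
    by_contra h
    rcases htri with ⟨-, h1, h2, h3⟩ | ⟨-, h1, h2, h3⟩
    · exact fin3_two 0 1 _ _ _
        (dsD N hN c hleft htop u v (by omega))
        (dsD N hN c hleft htop (u + 1) v (by omega))
        (dsD N hN c hleft htop u (v + 1) (by omega)) h1 h2 h3
    · exact fin3_two 0 1 _ _ _
        (dsD N hN c hleft htop (u + 1) v (by omega))
        (dsD N hN c hleft htop u (v + 1) (by omega))
        (dsD N hN c hleft htop (u + 1) (v + 1) (by omega)) h1 h2 h3
  refine ⟨hX, hY, fun k => ?_⟩
  rcases htri with ⟨-, h1, h2, h3⟩ | ⟨-, h1, h2, h3⟩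
  · have e1 := ds_in N hN c hleft hbottom u v u v hX hY (Or.inl rfl) (Or.inl rfl)
    have e2 := ds_in N hN c hleft hbottom u v (u + 1) v hX hY (Or.inr rfl) (Or.inl rfl)
    have e3 := ds_in N hN c hleft hbottom u v u (v + 1) hX hY (Or.inl rfl) (Or.inr rfl)
    rcases fin3_cover _ _ _ k h1 h2 h3 with hk | hk | hk
    · rcases e1 with e | e | e | e <;> rw [e] at hk <;> simp [hk]
    · rcases e2 with e | e | e | e <;> rw [e] at hk <;> simp [hk]
    · rcases e3 with e | e | e | e <;> rw [e] at hk <;> simp [hk]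
  · have e1 := ds_in N hN c hleft hbottom u v (u + 1) v hX hY (Or.inr rfl) (Or.inl rfl)
    have e2 := ds_in N hN c hleft hbottom u v u (v + 1) hX hY (Or.inl rfl) (Or.inr rfl)
    have e3 := ds_in N hN c hleft hbottom u v (u + 1) (v + 1) hX hY (Or.inr rfl) (Or.inr rfl)
    rcases fin3_cover _ _ _ k h1 h2 h3 with hk | hk | hk
    · rcases e1 with e | e | e | e <;> rw [e] at hk <;> simp [hk]
    · rcases e2 with e | e | e | e <;> rw [e] at hk <;> simp [hk]
    · rcases e3 with e | e | e | e <;> rw [e] at hk <;> simp [hk]
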